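/- For the group G₀ = {g ∈ SL(3,ℂ) : g₁₃ = g₂₃ = 0, g₃₃ = 1} and U₀ = G₀ ∩ U (U upper unitriangular), the map g ↦ (p(g), q(g)) (first column and cofactor vector of the first two columns) induces a bijection G₀/U₀ ≅ {(p,q) ∈ ℂ³×ℂ³ : p ≠ 0, q₃ = 1, p·q = 0}. -/

import Mathlib

open Matrix

/-- The subgroup G₀ = SL(2,ℂ) ⋉ ℂ² of SL(3,ℂ): matrices with last column (0,0,1)ᵗ. -/
def G0 : Set (Matrix.SpecialLinearGroup (Fin 3) ℂ) :=
  {g | (g : Matrix (Fin 3) (Fin 3) ℂ) 0 2 = 0 ∧ (g : Matrix (Fin 3) (Fin 3) ℂ) 1 2 = 0 ∧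
       (g : Matrix (Fin 3) (Fin 3) ℂ) 2 2 = 1}

/-- U₀ = G₀ ∩ U: upper unitriangular matrices of the form [[1,b,0],[0,1,0],[0,0,1]]. -/
def U0 : Set (Matrix.SpecialLinearGroup (Fin 3) ℂ) :=
  {u | (u : Matrix (Fin 3) (Fin 3) ℂ) 0 0 = 1 ∧ (u : Matrix (Fin 3) (Fin 3) ℂ) 1 1 = 1 ∧
       (u : Matrix (Fin 3) (Fin 3) ℂ) 2 2 = 1 ∧ (u : Matrix (Fin 3) (Fin 3) ℂ) 1 0 = 0 ∧
       (u : Matrix (Fin 3) (Fin 3) ℂ) 2 0 = 0 ∧ (u : Matrix (Fin 3) (Fin 3) ℂ) 2 1 = 0 ∧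
       (u : Matrix (Fin 3) (Fin 3) ℂ) 0 2 = 0 ∧ (u : Matrix (Fin 3) (Fin 3) ℂ) 1 2 = 0}

/-- First column of g. -/
def pVec (g : Matrix.SpecialLinearGroup (Fin 3) ℂ) : Fin 3 → ℂ :=
  fun i => (g : Matrix (Fin 3) (Fin 3) ℂ) i 0

/-- Cofactor vector of the first two columns of g. -/
def qVec (g : Matrix.SpecialLinearGroup (Fin 3) ℂ) : Fin 3 → ℂ :=
  ![(g : Matrix (Fin 3) (Fin 3) ℂ) 1 0 * (g : Matrix (Fin 3) (Fin 3) ℂ) 2 1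
      - (g : Matrix (Fin 3) (Fin 3) ℂ) 2 0 * (g : Matrix (Fin 3) (Fin 3) ℂ) 1 1,
    (g : Matrix (Fin 3) (Fin 3) ℂ) 2 0 * (g : Matrix (Fin 3) (Fin 3) ℂ) 0 1
      - (g : Matrix (Fin 3) (Fin 3) ℂ) 0 0 * (g : Matrix (Fin 3) (Fin 3) ℂ) 2 1,
    (g : Matrix (Fin 3) (Fin 3) ℂ) 0 0 * (g : Matrix (Fin 3) (Fin 3) ℂ) 1 1
      - (g : Matrix (Fin 3) (Fin 3) ℂ) 1 0 * (g : Matrix (Fin 3) (Fin 3) ℂ) 0 1]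

/-!
On `G₀` the third column is `e₃`, so `det g = (x × y)₃`, and `q(g) = x × y` is the cross product
of the first two columns. Hence `q₃ = 1`, `p · q = 0` and `p ≠ 0` on `G₀`. Conversely, when `p ≠ 0`
and `p · q = 0` one has `q = p × y` for some `y` (take `y = (q × eᵢ) / pᵢ` with `pᵢ ≠ 0`), and the
matrix with columns `p, y, e₃` is a preimage. Two elements of `G₀` with the same `p` have the same
`q` iff `p × (y' - y) = 0`, i.e. `y' = y + b p`, which is right multiplication by the shear with
entry `b`.
-/

local notation "SL₃" => SpecialLinearGroup (Fin 3) ℂ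

section CrossProduct

variable {K : Type*} [Field K]

theorem exists_cross_eq_of_dotProduct_eq_zero {p q : Fin 3 → K} (hp : p ≠ 0)
    (hpq : p ⬝ᵥ q = 0) : ∃ y, p ⨯₃ y = q := by
  obtain ⟨i, hi⟩ := Function.ne_iff.mp hp
  refine ⟨(p i)⁻¹ • q ⨯₃ Pi.single i 1, ?_⟩
  rw [map_smul, cross_cross_eq_smul_sub_smul', dotProduct_single, dotProduct_comm, hpq,
    zero_smul, sub_zero, mul_one, smul_smul, inv_mul_cancel₀ hi, one_smul]

theorem exists_eq_smul_of_cross_eq_zero {p w : Fin 3 → K} (hp : p ≠ 0) (h : p ⨯₃ w = 0) :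
    ∃ b : K, w = b • p := by
  have := mt crossProduct_ne_zero_iff_linearIndependent.mpr (not_not.mpr h)
  simpa [LinearIndependent.pair_iff' hp, eq_comm] using this

end CrossProduct

def secondColumn (g : SL₃) : Fin 3 → ℂ :=
  fun i => (g : Matrix (Fin 3) (Fin 3) ℂ) i 1

theorem qVec_eq_cross (g : SL₃) : qVec g = pVec g ⨯₃ secondColumn g := by
  ext i
  fin_cases i <;> simp [qVec, pVec, secondColumn, cross_apply]

theorem pVec_dotProduct_qVec (g : SL₃) : pVec g ⬝ᵥ qVec g = 0 := by
  rw [qVec_eq_cross, dot_self_cross]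

theorem qVec_two_of_mem_G0 {g : SL₃} (hg : g ∈ G0) : qVec g 2 = 1 := by
  obtain ⟨h02, h12, h22⟩ := hg
  have hdet := g.2
  rw [det_fin_three, h02, h12, h22] at hdet
  simp only [qVec, cons_val_two, tail_cons, head_cons]
  linear_combination hdet

theorem pVec_ne_zero_of_mem_G0 {g : SL₃} (hg : g ∈ G0) : pVec g ≠ 0 := by
  intro h
  have := qVec_two_of_mem_G0 hg
  rw [qVec_eq_cross, h, map_zero, LinearMap.zero_apply] at this
  exact zero_ne_one this

def ofColumns (x y : Fin 3 → ℂ) (h : (x ⨯₃ y) 2 = 1) : SL₃ :=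
  ⟨!![x 0, y 0, 0; x 1, y 1, 0; x 2, y 2, 1], by
    simp [det_fin_three]
    simpa [cross_apply, mul_comm] using h⟩

theorem ofColumns_mem_G0 (x y : Fin 3 → ℂ) (h : (x ⨯₃ y) 2 = 1) : ofColumns x y h ∈ G0 :=
  ⟨rfl, rfl, rfl⟩

theorem pVec_ofColumns (x y : Fin 3 → ℂ) (h : (x ⨯₃ y) 2 = 1) : pVec (ofColumns x y h) = x := by
  ext i
  fin_cases i <;> simp [pVec, ofColumns]

theorem qVec_ofColumns (x y : Fin 3 → ℂ) (h : (x ⨯₃ y) 2 = 1) :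
    qVec (ofColumns x y h) = x ⨯₃ y := by
  ext i
  fin_cases i <;> simp [qVec, ofColumns, cross_apply]

def shear (b : ℂ) : SL₃ :=
  ⟨!![1, b, 0; 0, 1, 0; 0, 0, 1], by simp [det_fin_three]⟩

theorem coe_shear (b : ℂ) :
    (shear b : Matrix (Fin 3) (Fin 3) ℂ) = !![1, b, 0; 0, 1, 0; 0, 0, 1] := rfl

theorem mem_U0_iff {u : SL₃} : u ∈ U0 ↔ ∃ b, u = shear b := by
  constructor
  · rintro ⟨h00, h11, h22, h10, h20, h21, h02, h12⟩
    refine ⟨(u : Matrix (Fin 3) (Fin 3) ℂ) 0 1, Subtype.ext <| Matrix.ext fun i j => ?_⟩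
    fin_cases i <;> fin_cases j <;> simp [coe_shear, *]
  · rintro ⟨b, rfl⟩
    exact ⟨rfl, rfl, rfl, rfl, rfl, rfl, rfl, rfl⟩

theorem pVec_mul_shear (g : SL₃) (b : ℂ) : pVec (g * shear b) = pVec g := by
  ext i
  simp [pVec, coe_shear, mul_apply, Fin.sum_univ_three]

theorem secondColumn_mul_shear (g : SL₃) (b : ℂ) :
    secondColumn (g * shear b) = secondColumn g + b • pVec g := by
  ext i
  simp [pVec, secondColumn, coe_shear, mul_apply, Fin.sum_univ_three, mul_comm, add_comm]

theorem qVec_mul_shear (g : SL₃) (b : ℂ) : qVec (g * shear b) = qVec g := by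
  rw [qVec_eq_cross, qVec_eq_cross, pVec_mul_shear, secondColumn_mul_shear, map_add, map_smul,
    cross_self, smul_zero, add_zero]

theorem eq_mul_shear_of_mem_G0 {g g' : SL₃} (hg : g ∈ G0) (hg' : g' ∈ G0) {b : ℂ}
    (h0 : pVec g' = pVec g) (h1 : secondColumn g' = secondColumn g + b • pVec g) :
    g' = g * shear b := by
  rw [← pVec_mul_shear g b] at h0
  rw [← secondColumn_mul_shear] at h1
  obtain ⟨g02, g12, g22⟩ := hg
  obtain ⟨g02', g12', g22'⟩ := hg'
  refine Subtype.ext <| Matrix.ext fun i j => ?_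
  fin_cases j
  · exact congrFun h0 i
  · exact congrFun h1 i
  · fin_cases i <;> simp [coe_shear, mul_apply, Fin.sum_univ_three, *]

/-- g ↦ (p(g),q(g)) induces a bijection
G₀/U₀ ≅ {(p,q) : p ≠ 0, q₃ = 1, p·q = 0}: it maps G₀ onto that set, and two
elements of G₀ have the same image iff they differ by right multiplication by
an element of U₀. -/
theorem G0_mod_U0_description :
    ((fun g => (pVec g, qVec g)) '' G0 =
      {pq : (Fin 3 → ℂ) × (Fin 3 → ℂ) | pq.1 ≠ 0 ∧ pq.2 2 = 1 ∧
        pq.1 0 * pq.2 0 + pq.1 1 * pq.2 1 + pq.1 2 * pq.2 2 = 0}) ∧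
    ∀ g ∈ G0, ∀ g' ∈ G0,
      ((pVec g, qVec g) = (pVec g', qVec g') ↔ ∃ u ∈ U0, g' = g * u) := by
  refine ⟨Set.Subset.antisymm ?_ ?_, fun g hg g' hg' => ⟨fun h => ?_, ?_⟩⟩
  · rintro _ ⟨g, hg, rfl⟩
    refine ⟨pVec_ne_zero_of_mem_G0 hg, qVec_two_of_mem_G0 hg, ?_⟩
    rw [← vec3_dotProduct, pVec_dotProduct_qVec]
  · rintro ⟨p, q⟩ ⟨hp, hq2, hpq⟩
    dsimp only at hp hq2 hpq
    obtain ⟨y, rfl⟩ := exists_cross_eq_of_dotProduct_eq_zero hp (by rwa [vec3_dotProduct])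
    exact ⟨ofColumns p y hq2, ofColumns_mem_G0 p y hq2, by
      simp only [pVec_ofColumns, qVec_ofColumns]⟩
  · obtain ⟨hp, hq⟩ := Prod.mk.inj h
    have hker : pVec g ⨯₃ (secondColumn g' - secondColumn g) = 0 := by
      rw [map_sub, ← qVec_eq_cross, hp, ← qVec_eq_cross, hq, sub_self]
    obtain ⟨b, hb⟩ := exists_eq_smul_of_cross_eq_zero (pVec_ne_zero_of_mem_G0 hg) hker
    exact ⟨shear b, mem_U0_iff.mpr ⟨b, rfl⟩,
      eq_mul_shear_of_mem_G0 hg hg' hp.symm (eq_add_of_sub_eq' hb)⟩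
  · rintro ⟨u, hu, rfl⟩
    obtain ⟨b, rfl⟩ := mem_U0_iff.mp hu
    rw [pVec_mul_shear, qVec_mul_shear]
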